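/- Let (k_n)_{n≥0} be a sequence of non-negative integers and Y_b the van der Corput sequence in base b. The sequence (Y_b(k_n))_{n≥0} is uniformly distributed modulo 1 if and only if (k_n) is uniformly distributed modulo b^d for every d ∈ ℕ₀. -/

import Mathlib

open scoped Classical
open Filter

/-- The b-adic radical inverse (van der Corput) function. -/
noncomputable def vdc (b n : ℕ) : ℝ :=
  ∑ j ∈ Finset.range (n + 1), ((n / b ^ j % b : ℕ) : ℝ) / (b : ℝ) ^ (j + 1)

/-!
The first `d` base-`b` digits of `Y_b(n)` are the last `d` digits of `n` in reverse order:
`⌊Y_b(n) b^d⌋ = digitRev b d n`, and `digitRev b d` is an involution of `{0, …, b^d - 1}` that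
only sees `n mod b^d`. Hence `Y_b(k_n)` lies in the `b`-adic interval `[m/b^d, (m+1)/b^d)`
exactly when `k_n ≡ digitRev b d m (mod b^d)`. Uniform distribution modulo 1 is in turn
equivalent to having the right frequencies on `b`-adic intervals: each `[0, c)` is squeezed
between two finite unions of them whose lengths differ by `b^(-d)`.
-/

namespace VanDerCorput

def digitRev (b d n : ℕ) : ℕ := ∑ j ∈ Finset.range d, n / b ^ j % b * b ^ (d - 1 - j)

section digitRev

variable {b : ℕ}

theorem digitRev_succ (b d n : ℕ) :
    digitRev b (d + 1) n = n % b * b ^ d + digitRev b d (n / b) := by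
  rw [digitRev, Finset.sum_range_succ', digitRev, add_comm]
  congr 1
  · simp
  · refine Finset.sum_congr rfl fun j _ => ?_
    rw [Nat.div_div_eq_div_mul, ← pow_succ']
    congr 2
    omega

theorem digitRev_succ' (b d n : ℕ) :
    digitRev b (d + 1) n = b * digitRev b d n + n / b ^ d % b := by
  rw [digitRev, Finset.sum_range_succ, digitRev, Finset.mul_sum]
  congr 1
  · refine Finset.sum_congr rfl fun j hj => ?_
    have := Finset.mem_range.mp hj
    rw [mul_left_comm, ← pow_succ']
    congr 2
    omega
  · simp

theorem mod_pow_div_pow_mod {d j : ℕ} (n : ℕ) (hj : j < d) :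
    n % b ^ d / b ^ j % b = n / b ^ j % b := by
  obtain ⟨e, rfl⟩ := Nat.exists_eq_add_of_lt hj
  rw [add_assoc, pow_add, Nat.mod_mul_right_div_self, pow_succ', Nat.mod_mul_right_mod]

theorem digitRev_mod_pow (d n : ℕ) : digitRev b d (n % b ^ d) = digitRev b d n :=
  Finset.sum_congr rfl fun j hj => by rw [mod_pow_div_pow_mod n (Finset.mem_range.mp hj)]

theorem digitRev_lt (hb : 0 < b) (d n : ℕ) : digitRev b d n < b ^ d := by
  induction d generalizing n with
  | zero => simp [digitRev]
  | succ d ih =>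
    calc digitRev b (d + 1) n = n % b * b ^ d + digitRev b d (n / b) := digitRev_succ b d n
      _ < (n % b + 1) * b ^ d := by rw [add_one_mul]; exact Nat.add_lt_add_left (ih _) _
      _ ≤ b ^ (d + 1) := by rw [pow_succ']; exact Nat.mul_le_mul_right _ (Nat.mod_lt n hb)

theorem digitRev_digitRev (hb : 0 < b) {d n : ℕ} (hn : n < b ^ d) :
    digitRev b d (digitRev b d n) = n := by
  induction d generalizing n with
  | zero => simp_all [digitRev]
  | succ d ih =>
    have hn' : n / b < b ^ d := by rwa [Nat.div_lt_iff_lt_mul hb, ← pow_succ]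
    have hrev := digitRev_lt hb d (n / b)
    rw [digitRev_succ' b d, digitRev_succ b d, ← digitRev_mod_pow, Nat.mul_add_mod_self_right,
      Nat.mod_eq_of_lt hrev, ih hn', mul_comm (n % b), Nat.mul_add_div (by positivity),
      Nat.div_eq_of_lt hrev, add_zero, Nat.mod_mod, Nat.div_add_mod]

end digitRev

section vdc

variable {b : ℕ}

theorem vdc_eq_sum_range (hb : 2 ≤ b) {n M : ℕ} (hM : n < M) :
    vdc b n = ∑ j ∈ Finset.range M, ((n / b ^ j % b : ℕ) : ℝ) / (b : ℝ) ^ (j + 1) := by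
  refine Finset.sum_subset (Finset.range_subset_range.mpr hM) fun j _ hj => ?_
  have hnj : n < b ^ j :=
    (Nat.lt_pow_self hb).trans_le (Nat.pow_le_pow_right (by omega) (by simp at hj; omega))
  simp [Nat.div_eq_of_lt hnj]

theorem vdc_eq_mod_add_div (hb : 2 ≤ b) (n : ℕ) : vdc b n = ((n % b : ℕ) + vdc b (n / b)) / b := by
  rw [vdc_eq_sum_range hb (M := n + 2) (by omega), Finset.sum_range_succ',
    vdc_eq_sum_range hb (M := n + 1) (Nat.lt_succ_of_le (Nat.div_le_self n b)), add_comm,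
    add_div, Finset.sum_div]
  congr 1
  · simp
  · refine Finset.sum_congr rfl fun j _ => ?_
    rw [Nat.div_div_eq_div_mul, ← pow_succ', div_div, ← pow_succ]

theorem vdc_nonneg (b n : ℕ) : 0 ≤ vdc b n := Finset.sum_nonneg fun _ _ => by positivity

theorem vdc_lt_one (hb : 2 ≤ b) (n : ℕ) : vdc b n < 1 := by
  induction n using Nat.strong_induction_on with
  | _ n ih =>
    rcases n.eq_zero_or_pos with rfl | hn
    · simp [vdc]
    · have hdigit : ((n % b : ℕ) : ℝ) + 1 ≤ b := by exact_mod_cast Nat.mod_lt n (by omega)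
      have := ih (n / b) (Nat.div_lt_self hn (by omega))
      rw [vdc_eq_mod_add_div hb, div_lt_one (by positivity)]
      linarith

theorem floor_vdc_mul_pow (hb : 2 ≤ b) (d n : ℕ) : ⌊vdc b n * b ^ d⌋₊ = digitRev b d n := by
  induction d generalizing n with
  | zero => simpa [digitRev] using vdc_lt_one hb n
  | succ d ih =>
    have hb0 : (b : ℝ) ≠ 0 := by norm_cast; omega
    have : ((n % b : ℕ) + vdc b (n / b)) / b * b ^ (d + 1) =
        vdc b (n / b) * b ^ d + ((n % b * b ^ d : ℕ) : ℝ) := by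
      push_cast; field_simp; ring
    have hnonneg : 0 ≤ vdc b (n / b) * b ^ d := by have := vdc_nonneg b (n / b); positivity
    rw [vdc_eq_mod_add_div hb, this, Nat.floor_add_natCast hnonneg, ih, digitRev_succ, add_comm]

theorem vdc_mem_Ico_iff (hb : 2 ≤ b) {d m : ℕ} (hm : m < b ^ d) (n : ℕ) :
    vdc b n ∈ Set.Ico ((m : ℝ) / b ^ d) ((m + 1) / b ^ d) ↔ n % b ^ d = digitRev b d m := by
  have hB : (0 : ℝ) < b ^ d := pow_pos (by norm_cast; omega) d
  have hnonneg : 0 ≤ vdc b n * b ^ d := mul_nonneg (vdc_nonneg b n) hB.le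
  rw [Set.mem_Ico, div_le_iff₀ hB, lt_div_iff₀ hB, ← Nat.floor_eq_iff hnonneg,
    floor_vdc_mul_pow hb, ← digitRev_mod_pow]
  constructor
  · rintro rfl
    exact (digitRev_digitRev (by omega) (Nat.mod_lt n (by positivity))).symm
  · intro h
    rw [h, digitRev_digitRev (by omega) hm]

end vdc

noncomputable def freq (p : ℕ → Prop) [DecidablePred p] (N : ℕ) : ℝ :=
  ((Finset.range N).filter p).card / N

section freq

variable {p q : ℕ → Prop} [DecidablePred p] [DecidablePred q]

theorem freq_congr (h : ∀ n, p n ↔ q n) : freq p = freq q := by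
  ext N
  rw [freq, freq, Finset.filter_congr fun n _ => h n]

theorem freq_mono (h : ∀ n, p n → q n) (N : ℕ) : freq p N ≤ freq q N := by
  unfold freq
  gcongr with n
  exact h n

theorem freq_or (h : ∀ n, p n → ¬ q n) (N : ℕ) :
    freq (fun n => p n ∨ q n) N = freq p N + freq q N := by
  rw [freq, freq, freq, ← add_div, Finset.filter_or,
    Finset.card_union_of_disjoint (Finset.disjoint_filter.2 fun n _ => h n), Nat.cast_add]

end freq

section bAdic

variable {x : ℕ → ℝ} {b : ℕ}

theorem freq_Ico_add_freq_Ico {a c e : ℝ} (hac : a ≤ c) (hce : c ≤ e) (N : ℕ) :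
    freq (fun n => x n ∈ Set.Ico a e) N =
      freq (fun n => x n ∈ Set.Ico a c) N + freq (fun n => x n ∈ Set.Ico c e) N := by
  rw [← freq_or fun n h h' => Set.disjoint_left.1 Set.Ico_disjoint_Ico_same h h']
  exact congrFun (freq_congr fun n => by rw [← Set.mem_union, Set.Ico_union_Ico_eq_Ico hac hce]) N

theorem tendsto_freq_Ico_zero_div {d : ℕ}
    (h : ∀ m < b ^ d, Tendsto (freq fun n => x n ∈ Set.Ico ((m : ℝ) / b ^ d) ((m + 1) / b ^ d))
      atTop (nhds (1 / (b : ℝ) ^ d)))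
    {m : ℕ} (hm : m ≤ b ^ d) :
    Tendsto (freq fun n => x n ∈ Set.Ico 0 ((m : ℝ) / b ^ d)) atTop (nhds ((m : ℝ) / b ^ d)) := by
  induction m with
  | zero =>
    have hempty : freq (fun n => x n ∈ Set.Ico 0 (((0 : ℕ) : ℝ) / b ^ d)) = fun _ => 0 := by
      ext N
      simp [freq]
    rw [hempty, Nat.cast_zero, zero_div]
    exact tendsto_const_nhds
  | succ m ih =>
    have hmono : (m : ℝ) / b ^ d ≤ (m + 1) / b ^ d := by gcongr; linarith
    have hlim := (ih (by omega)).add (h m (by omega))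
    rw [← add_div] at hlim
    rw [Nat.cast_succ]
    exact hlim.congr fun N => (freq_Ico_add_freq_Ico (by positivity) hmono N).symm

theorem tendsto_freq_Ico_zero (hb : 1 < b)
    (h : ∀ d, ∀ m < b ^ d, Tendsto (freq fun n => x n ∈ Set.Ico ((m : ℝ) / b ^ d) ((m + 1) / b ^ d))
      atTop (nhds (1 / (b : ℝ) ^ d)))
    {c : ℝ} (hc0 : 0 ≤ c) (hc1 : c ≤ 1) :
    Tendsto (freq fun n => x n ∈ Set.Ico 0 c) atTop (nhds c) := by
  have hmesh : ∀ ε > 0, ∃ d : ℕ, 1 / (b : ℝ) ^ d < ε := fun ε hε => by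
    obtain ⟨d, hd⟩ := exists_pow_lt_of_lt_one hε
      ((div_lt_one (by positivity)).2 (by exact_mod_cast hb) : 1 / (b : ℝ) < 1)
    exact ⟨d, by rwa [one_div_pow] at hd⟩
  have hcB : ∀ d : ℕ, c * b ^ d ≤ ((b ^ d : ℕ) : ℝ) := fun d => by
    push_cast
    exact mul_le_of_le_one_left (by positivity) hc1
  rw [tendsto_order]
  constructor
  · intro c' hc'
    obtain ⟨d, hd⟩ := hmesh (c - c') (by linarith)
    have hB : (0 : ℝ) < b ^ d := by positivity
    have hlt : c' < (⌊c * b ^ d⌋₊ : ℝ) / b ^ d := by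
      have := Nat.lt_floor_add_one (c * b ^ d)
      rw [lt_div_iff₀ hB]
      rw [div_lt_iff₀ hB] at hd
      nlinarith
    have hle : (⌊c * b ^ d⌋₊ : ℝ) / b ^ d ≤ c := (div_le_iff₀ hB).2 (Nat.floor_le (by positivity))
    filter_upwards [(tendsto_freq_Ico_zero_div (h d) (Nat.floor_le_of_le (hcB d))).eventually
      (lt_mem_nhds hlt)] with N hN
    exact hN.trans_le (freq_mono (fun n hn => Set.Ico_subset_Ico_right hle hn) N)
  · intro c' hc'
    obtain ⟨d, hd⟩ := hmesh (c' - c) (by linarith)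
    have hB : (0 : ℝ) < b ^ d := by positivity
    have hlt : (⌈c * b ^ d⌉₊ : ℝ) / b ^ d < c' := by
      have := Nat.ceil_lt_add_one (by positivity : 0 ≤ c * b ^ d)
      rw [div_lt_iff₀ hB]
      rw [div_lt_iff₀ hB] at hd
      nlinarith
    have hle : c ≤ (⌈c * b ^ d⌉₊ : ℝ) / b ^ d := (le_div_iff₀ hB).2 (Nat.le_ceil _)
    filter_upwards [(tendsto_freq_Ico_zero_div (h d) (Nat.ceil_le.2 (hcB d))).eventually
      (gt_mem_nhds hlt)] with N hN
    exact (freq_mono (fun n hn => Set.Ico_subset_Ico_right hle hn) N).trans_lt hN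

theorem tendsto_freq_Ico (hb : 1 < b)
    (h : ∀ d, ∀ m < b ^ d, Tendsto (freq fun n => x n ∈ Set.Ico ((m : ℝ) / b ^ d) ((m + 1) / b ^ d))
      atTop (nhds (1 / (b : ℝ) ^ d)))
    {a c : ℝ} (ha : 0 ≤ a) (hac : a ≤ c) (hc : c ≤ 1) :
    Tendsto (freq fun n => x n ∈ Set.Ico a c) atTop (nhds (c - a)) := by
  refine ((tendsto_freq_Ico_zero hb h (ha.trans hac) hc).sub
    (tendsto_freq_Ico_zero hb h ha (hac.trans hc))).congr fun N => ?_
  rw [freq_Ico_add_freq_Ico ha hac N]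
  ring

end bAdic

end VanDerCorput

open VanDerCorput in
/-- The subsequence `(Y_b(k_n))` of the van der Corput sequence in base `b` is uniformly
distributed modulo 1 iff `(k_n)` is uniformly distributed modulo `b ^ d` for every `d`. -/
theorem vdc_subsequence_ud_iff (b : ℕ) (hb : 2 ≤ b) (k : ℕ → ℕ) :
    (∀ a c : ℝ, 0 ≤ a → a < c → c ≤ 1 →
        Tendsto (fun N : ℕ =>
            (((Finset.range N).filter (fun n => vdc b (k n) ∈ Set.Ico a c)).card : ℝ) / N)
          atTop (nhds (c - a)))
      ↔ ∀ d : ℕ, ∀ j < b ^ d,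
          Tendsto (fun N : ℕ =>
              (((Finset.range N).filter (fun n => k n % b ^ d = j)).card : ℝ) / N)
            atTop (nhds (1 / (b : ℝ) ^ d)) := by
  have hb0 : 0 < b := by omega
  have hfreq : ∀ d, ∀ m < b ^ d,
      (freq fun n => vdc b (k n) ∈ Set.Ico ((m : ℝ) / b ^ d) ((m + 1) / b ^ d)) =
        freq fun n => k n % b ^ d = digitRev b d m :=
    fun d m hm => freq_congr fun n => vdc_mem_Ico_iff hb hm (k n)
  constructor
  · intro h d j hj
    set m := digitRev b d j
    have hm : m < b ^ d := digitRev_lt hb0 d j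
    have hB : (0 : ℝ) < b ^ d := by positivity
    have key := h (m / b ^ d) ((m + 1) / b ^ d) (by positivity)
      ((div_lt_div_iff_of_pos_right hB).2 (lt_add_one _)) ((div_le_one hB).2 (by exact_mod_cast hm))
    rw [← sub_div, add_sub_cancel_left] at key
    change Tendsto (freq _) _ _ at key
    rwa [hfreq d _ hm, digitRev_digitRev hb0 hj] at key
  · intro h a c ha hac hc
    refine tendsto_freq_Ico (by omega : 1 < b) (fun d m hm => ?_) ha hac.le hc
    rw [hfreq d m hm]
    exact h d _ (digitRev_lt hb0 d m)
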